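/- arXiv:math/0312059 — 3 statements merged into one kernel-verified Lean document; each statement's English description precedes it below -/
import Mathlib

section
/- The Taylor complex of a monomial ideal is exact: if I ⊂ ℂ[x₁,…,x_n] is generated by monomials m₁,…,m_s, and for each nonempty T ⊆ {1,…,s} we let m_T = lcm{m_i : i ∈ T}, and F_t is the free module with basis e_T indexed by subsets T of size t, with differential d(e_T) = Σ_k (−1)^k (m_T/m_{T∖{i_k}}) e_{T∖{i_k}} for T = {i₁ < ⋯ < i_t}, then the complex 0 → F_s → ⋯ → F₂ → F₁ → I → 0 (with F₁ → I sending e_{{i}} ↦ m_i) is an exact sequence of modules. -/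
open scoped Classical

namespace TaylorComplex

variable (n s : ℕ) (a : Fin s → (Fin n →₀ ℕ))

/-- The ambient polynomial ring `R = ℂ[x₁,…,x_n]`. -/
abbrev R : Type := MvPolynomial (Fin n) ℂ

/-- The `t`-th term `F_t` of the Taylor complex: the free `R`-module with
basis `e_T` indexed by the subsets `T ⊆ {1,…,s}` of size `t`. -/
abbrev F (t : ℕ) : Type := {T : Finset (Fin s) // T.card = t} →₀ R n

/-- The exponent of `m_T = lcm { m_i : i ∈ T }` for monomials `m_i = x^{a i}`:
the componentwise sup of the exponents. -/
noncomputable def lcmExp (T : Finset (Fin s)) : Fin n →₀ ℕ := T.sup a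

/-- The Taylor differential `d : F_{t+1} → F_t`,
`d(e_T) = Σ_k (−1)^k (m_T / m_{T∖{i_k}}) e_{T∖{i_k}}` for
`T = {i₁ < ⋯ < i_{t+1}}`. -/
noncomputable def D (t : ℕ) (v : F n s (t + 1)) : F n s t :=
  v.sum fun T c =>
    ∑ i ∈ T.1.attach,
      Finsupp.single
        (⟨T.1.erase i.1, by
          simp [Finset.card_erase_of_mem i.2, T.2]⟩ : {T : Finset (Fin s) // T.card = t})
        (((-1 : R n) ^ ((T.1.filter (fun j => j < i.1)).card + 1)) * c *
          MvPolynomial.monomial (lcmExp n s a T.1 - lcmExp n s a (T.1.erase i.1)) (1 : ℂ))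

/-- The augmentation `F₁ → I ⊆ R`, `e_{{i}} ↦ m_i = x^{a i}`. -/
noncomputable def eps (v : F n s 1) : R n :=
  v.sum fun T c => c * ∑ i ∈ T.1, MvPolynomial.monomial (a i) (1 : ℂ)

-- ==== auxiliary development ====
open MvPolynomial Finset

def pos (T : Finset (Fin s)) (i : Fin s) : ℕ := (T.filter (fun j => j < i)).card

noncomputable def dTerm (t : ℕ) (T : Finset (Fin s)) (c : R n) (i : Fin s) : F n s t :=
  if h : i ∈ T ∧ T.card = t + 1 then
    Finsupp.single ⟨T.erase i, by simp [Finset.card_erase_of_mem h.1, h.2]⟩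
      (((-1 : R n) ^ (pos s T i + 1)) * c *
        MvPolynomial.monomial (lcmExp n s a T - lcmExp n s a (T.erase i)) (1 : ℂ))
  else 0

lemma D_single (t : ℕ) (T : {T : Finset (Fin s) // T.card = t + 1}) (c : R n) :
    D n s a t (Finsupp.single T c) = ∑ i ∈ T.1, dTerm n s a t T.1 c i := by
  rw [D, Finsupp.sum_single_index]
  · rw [← Finset.sum_attach T.1 (fun i => dTerm n s a t T.1 c i)]
    refine Finset.sum_congr rfl fun i _ => ?_
    rw [dTerm, dif_pos ⟨i.2, T.2⟩, pos]
  · simp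

lemma D_add (t : ℕ) (v w : F n s (t+1)) : D n s a t (v + w) = D n s a t v + D n s a t w := by
  rw [D, D, D, Finsupp.sum_add_index]
  · intro T _; simp
  · intro T _ c c'
    rw [← Finset.sum_add_distrib]
    refine Finset.sum_congr rfl fun i _ => ?_
    rw [← Finsupp.single_add]
    ring_nf

lemma eps_add (v w : F n s 1) : eps n s a (v + w) = eps n s a v + eps n s a w := by
  rw [eps, eps, eps, Finsupp.sum_add_index] <;> intros <;> simp [add_mul]

lemma eps_smul (r : R n) (v : F n s 1) : eps n s a (r • v) = r * eps n s a v := by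
  rw [eps, eps, Finsupp.sum_smul_index', Finsupp.mul_sum]
  · refine Finset.sum_congr rfl fun T _ => ?_; simp only [smul_eq_mul]; ring
  · intro T; simp


def Sb (b : Fin n →₀ ℕ) : Finset (Fin s) := Finset.univ.filter (fun i => a i ≤ b)

lemma mem_Sb {i : Fin s} {b} : i ∈ Sb n s a b ↔ a i ≤ b := by simp [Sb]

noncomputable def jm (b : Fin n →₀ ℕ) : Option (Fin s) :=
  if h : (Sb n s a b).Nonempty then some ((Sb n s a b).min' h) else none

lemma jm_mem {b : Fin n →₀ ℕ} {j : Fin s} (h : jm n s a b = some j) : a j ≤ b := by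
  rw [jm] at h
  split at h
  · rw [← mem_Sb n s a]; exact Option.some_injective _ h ▸ (Sb n s a b).min'_mem _
  · exact absurd h (by simp)

lemma jm_min {b : Fin n →₀ ℕ} {j : Fin s} (h : jm n s a b = some j) :
    ∀ k, a k ≤ b → j ≤ k := by
  intro k hk
  rw [jm] at h
  split at h
  · exact Option.some_injective _ h ▸ Finset.min'_le _ _ ((mem_Sb n s a).2 hk)
  · exact absurd h (by simp)

lemma jm_some {b : Fin n →₀ ℕ} {i : Fin s} (hi : a i ≤ b) : ∃ j, jm n s a b = some j := by
  have hne : (Sb n s a b).Nonempty := ⟨i, (mem_Sb n s a).2 hi⟩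
  exact ⟨_, dif_pos hne⟩

noncomputable def Hterm (t : ℕ) (T : Finset (Fin s)) (u : Fin n →₀ ℕ) (z : ℂ) : F n s (t+1) :=
  match jm n s a (u + lcmExp n s a T) with
  | none => 0
  | some j =>
    if h : j ∉ T ∧ T.card = t then
      Finsupp.single ⟨insert j T, by rw [Finset.card_insert_of_notMem h.1, h.2]⟩
        (MvPolynomial.monomial (u + lcmExp n s a T - lcmExp n s a (insert j T)) (-z))
    else 0

noncomputable def H0term (u : Fin n →₀ ℕ) (z : ℂ) : F n s 1 :=
  match jm n s a u with
  | none => 0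
  | some j => Finsupp.single ⟨{j}, Finset.card_singleton j⟩ (MvPolynomial.monomial (u - a j) z)

lemma Hterm_zero (t : ℕ) (T : Finset (Fin s)) (u : Fin n →₀ ℕ) :
    Hterm n s a t T u 0 = 0 := by
  rw [Hterm]
  rcases jm n s a (u + lcmExp n s a T) with _ | j
  · rfl
  · simp

lemma Hterm_add (t : ℕ) (T : Finset (Fin s)) (u : Fin n →₀ ℕ) (y z : ℂ) :
    Hterm n s a t T u (y + z) = Hterm n s a t T u y + Hterm n s a t T u z := by
  rw [Hterm, Hterm, Hterm]
  rcases jm n s a (u + lcmExp n s a T) with _ | j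
  · simp
  · by_cases h : j ∉ T ∧ T.card = t
    · simp only [dif_pos h, neg_add, map_add, Finsupp.single_add]
    · simp [dif_neg h]

lemma H0term_zero (u : Fin n →₀ ℕ) : H0term n s a u 0 = 0 := by
  rw [H0term]
  rcases jm n s a u with _ | j
  · rfl
  · simp

lemma H0term_add (u : Fin n →₀ ℕ) (y z : ℂ) :
    H0term n s a u (y + z) = H0term n s a u y + H0term n s a u z := by
  rw [H0term, H0term, H0term]
  rcases jm n s a u with _ | j
  · simp
  · simp [map_add, Finsupp.single_add]

noncomputable def H (t : ℕ) (v : F n s t) : F n s (t+1) :=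
  v.sum fun T c => ∑ u ∈ c.support, Hterm n s a t T.1 u (MvPolynomial.coeff u c)

noncomputable def H0 (p : R n) : F n s 1 :=
  ∑ u ∈ p.support, H0term n s a u (MvPolynomial.coeff u p)

lemma support_sum_add {M : Type*} [AddCommMonoid M] (p q : R n)
    (g : (Fin n →₀ ℕ) → ℂ → M) (hz : ∀ u, g u 0 = 0)
    (hadd : ∀ u y z, g u (y + z) = g u y + g u z) :
    ∑ u ∈ (p + q).support, g u (MvPolynomial.coeff u (p + q))
      = ∑ u ∈ p.support, g u (MvPolynomial.coeff u p)
        + ∑ u ∈ q.support, g u (MvPolynomial.coeff u q) := by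
  exact Finsupp.sum_add_index (fun u _ => hz u) (fun u _ y z => hadd u y z)

lemma H_single (t : ℕ) (T : {T : Finset (Fin s) // T.card = t}) (u : Fin n →₀ ℕ) (z : ℂ) :
    H n s a t (Finsupp.single T (MvPolynomial.monomial u z)) = Hterm n s a t T.1 u z := by
  rw [H, Finsupp.sum_single_index (by simp)]
  by_cases hz : z = 0
  · simp [hz, MvPolynomial.support_monomial, Hterm_zero]
  · rw [MvPolynomial.support_monomial, if_neg hz, Finset.sum_singleton,
      MvPolynomial.coeff_monomial, if_pos rfl]

lemma H0_single (u : Fin n →₀ ℕ) (z : ℂ) :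
    H0 n s a (MvPolynomial.monomial u z) = H0term n s a u z := by
  rw [H0]
  by_cases hz : z = 0
  · simp [hz, MvPolynomial.support_monomial, H0term_zero]
  · rw [MvPolynomial.support_monomial, if_neg hz, Finset.sum_singleton,
      MvPolynomial.coeff_monomial, if_pos rfl]

lemma H_add (t : ℕ) (v w : F n s t) : H n s a t (v + w) = H n s a t v + H n s a t w := by
  rw [H, H, H]
  refine Finsupp.sum_add_index (fun T _ => by simp) (fun T _ c c' => ?_)
  exact support_sum_add n c c' _ (fun u => Hterm_zero n s a t T.1 u)
    (fun u y z => Hterm_add n s a t T.1 u y z)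

lemma H0_add (p q : R n) : H0 n s a (p + q) = H0 n s a p + H0 n s a q := by
  rw [H0, H0, H0]
  exact support_sum_add n p q _ (H0term_zero n s a) (H0term_add n s a)


-- ==== stage 3: combinatorics and dd = 0 ====

lemma le_B {i : Fin s} {T : Finset (Fin s)} (h : i ∈ T) : a i ≤ lcmExp n s a T :=
  Finset.le_sup h

lemma B_mono {T U : Finset (Fin s)} (h : T ⊆ U) : lcmExp n s a T ≤ lcmExp n s a U :=
  Finset.sup_mono h

lemma B_erase_le (T : Finset (Fin s)) (i : Fin s) :
    lcmExp n s a (T.erase i) ≤ lcmExp n s a T :=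
  B_mono n s a (Finset.erase_subset i T)

lemma pos_erase_of_lt {T : Finset (Fin s)} {i k : Fin s} (hi : i ∈ T) (hik : i < k) :
    pos s T k = pos s (T.erase i) k + 1 := by
  have hmem : i ∈ T.filter (fun j => j < k) := Finset.mem_filter.2 ⟨hi, hik⟩
  have hpos : 1 ≤ (T.filter (fun j => j < k)).card := Finset.card_pos.2 ⟨i, hmem⟩
  rw [pos, pos, Finset.filter_erase, Finset.card_erase_of_mem hmem]
  omega

lemma pos_erase_of_not_lt {T : Finset (Fin s)} {i k : Fin s} (hik : ¬ i < k) :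
    pos s (T.erase i) k = pos s T k := by
  rw [pos, pos, Finset.filter_erase, Finset.erase_eq_of_notMem (by simp [hik])]

lemma pos_eq_zero {T : Finset (Fin s)} {j : Fin s} (hj : ∀ k ∈ T, j ≤ k) : pos s T j = 0 := by
  rw [pos, Finset.card_eq_zero, Finset.filter_eq_empty_iff]
  exact fun k hk => not_lt.2 (hj k hk)

lemma pos_insert {T : Finset (Fin s)} {j i : Fin s} (hjT : j ∉ T) (hji : j < i) :
    pos s (insert j T) i = pos s T i + 1 := by
  rw [pos, pos, Finset.filter_insert, if_pos hji,
    Finset.card_insert_of_notMem (by simp [hjT])]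

lemma neg_one_pow_mul (p : ℕ) (u δ : Fin n →₀ ℕ) (z : ℂ) :
    ((-1 : R n) ^ p) * MvPolynomial.monomial u z * MvPolynomial.monomial δ (1 : ℂ)
      = MvPolynomial.monomial (u + δ) ((-1 : ℂ)^p * z) := by
  have h : (-1 : R n) ^ p = MvPolynomial.C ((-1 : ℂ)^p) := by rw [map_pow, map_neg, map_one]
  rw [h, mul_assoc, MvPolynomial.monomial_mul, MvPolynomial.C_mul_monomial, mul_one]

lemma dTerm_monomial {t : ℕ} {T : Finset (Fin s)} {i : Fin s} (hi : i ∈ T)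
    (hT : T.card = t + 1) (u : Fin n →₀ ℕ) (z : ℂ) :
    dTerm n s a t T (MvPolynomial.monomial u z) i
      = Finsupp.single ⟨T.erase i, by simp [Finset.card_erase_of_mem hi, hT]⟩
          (MvPolynomial.monomial (u + (lcmExp n s a T - lcmExp n s a (T.erase i)))
            ((-1 : ℂ)^(pos s T i + 1) * z)) := by
  rw [dTerm, dif_pos ⟨hi, hT⟩, neg_one_pow_mul]

lemma addhom_sum {α M N : Type*} [AddCommGroup M] [AddCommGroup N] (g : M → N)
    (hadd : ∀ x y, g (x + y) = g x + g y) {S : Finset α} (f : α → M) :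
    g (∑ i ∈ S, f i) = ∑ i ∈ S, g (f i) :=
  map_sum (AddMonoidHom.mk' g hadd) f S

lemma addhom_zero {M N : Type*} [AddCommGroup M] [AddCommGroup N] (g : M → N)
    (hadd : ∀ x y, g (x + y) = g x + g y) : g 0 = 0 :=
  (AddMonoidHom.mk' g hadd).map_zero

lemma F_induction {t : ℕ} (P : F n s t → Prop) (h0 : P 0)
    (hadd : ∀ v w, P v → P w → P (v + w))
    (hsingle : ∀ (T : {T : Finset (Fin s) // T.card = t}) (u : Fin n →₀ ℕ) (z : ℂ),
      P (Finsupp.single T (MvPolynomial.monomial u z))) : ∀ v, P v := by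
  have hs : ∀ (T : {T : Finset (Fin s) // T.card = t}) (c : R n), P (Finsupp.single T c) := by
    intro T c
    induction c using MvPolynomial.induction_on' with
    | monomial u z => exact hsingle T u z
    | add p q hp hq => rw [Finsupp.single_add]; exact hadd _ _ hp hq
  intro v
  induction v using Finsupp.induction with
  | zero => exact h0
  | single_add T c v _ _ ih => exact hadd _ _ (hs T c) ih

lemma dd_single (t : ℕ) (T : Finset (Fin s)) (hT : T.card = t + 2) (u : Fin n →₀ ℕ) (z : ℂ) :
    D n s a t (D n s a (t+1) (Finsupp.single (⟨T, hT⟩ : {T : Finset (Fin s) // T.card = t + 2})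
      (MvPolynomial.monomial u z))) = 0 := by
  rw [D_single, addhom_sum (D n s a t) (D_add n s a t)]
  have step : ∀ i ∈ T, D n s a t (dTerm n s a (t+1) T (MvPolynomial.monomial u z) i)
      = ∑ k ∈ T.erase i, dTerm n s a t (T.erase i)
          (MvPolynomial.monomial (u + (lcmExp n s a T - lcmExp n s a (T.erase i)))
            ((-1 : ℂ)^(pos s T i + 1) * z)) k := by
    intro i hi
    rw [dTerm_monomial n s a hi hT, D_single]
  rw [Finset.sum_congr rfl step, Finset.sum_sigma']
  refine Finset.sum_involution (fun p _ => ⟨p.2, p.1⟩) ?_ ?_ ?_ ?_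
  · -- cancellation
    rintro ⟨i, k⟩ hp
    rw [Finset.mem_sigma] at hp
    obtain ⟨hiT, hk⟩ := hp
    have hkT : k ∈ T := Finset.mem_of_mem_erase hk
    have hki : k ≠ i := Finset.ne_of_mem_erase hk
    have hiTk : i ∈ T.erase k := Finset.mem_erase.2 ⟨hki.symm, hiT⟩
    have hcard1 : (T.erase i).card = t + 1 := by rw [Finset.card_erase_of_mem hiT, hT]; omega
    have hcard2 : (T.erase k).card = t + 1 := by rw [Finset.card_erase_of_mem hkT, hT]; omega
    rw [dTerm_monomial n s a hk hcard1, dTerm_monomial n s a hiTk hcard2]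
    -- normalize the index sets and exponents
    have hsets : (T.erase k).erase i = (T.erase i).erase k := Finset.erase_right_comm
    have hexp1 : (u + (lcmExp n s a T - lcmExp n s a (T.erase i)))
        + (lcmExp n s a (T.erase i) - lcmExp n s a ((T.erase i).erase k))
        = u + (lcmExp n s a T - lcmExp n s a ((T.erase i).erase k)) := by
      rw [add_assoc, tsub_add_tsub_cancel (B_erase_le n s a T i) (B_erase_le n s a _ k)]
    have hle : lcmExp n s a ((T.erase i).erase k) ≤ lcmExp n s a (T.erase k) :=
      B_mono n s a (by rw [← hsets]; exact Finset.erase_subset _ _)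
    have hexp2 : (u + (lcmExp n s a T - lcmExp n s a (T.erase k)))
        + (lcmExp n s a (T.erase k) - lcmExp n s a ((T.erase i).erase k))
        = u + (lcmExp n s a T - lcmExp n s a ((T.erase i).erase k)) := by
      rw [add_assoc, tsub_add_tsub_cancel (B_erase_le n s a T k) hle]
    simp only [hsets]
    simp only [hexp1, hexp2]
    rw [← Finsupp.single_add, ← map_add, Finsupp.single_eq_zero,
      MvPolynomial.monomial_eq_zero]
    rcases lt_or_gt_of_ne (hki.symm : i ≠ k) with hlt | hgt
    · rw [show pos s T k = pos s (T.erase i) k + 1 from pos_erase_of_lt s hiT hlt,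
        pos_erase_of_not_lt s (not_lt.2 hlt.le)]
      ring
    · rw [show pos s T i = pos s (T.erase k) i + 1 from pos_erase_of_lt s hkT hgt,
        pos_erase_of_not_lt s (not_lt.2 hgt.le)]
      ring
  · rintro ⟨i, k⟩ hp _
    intro h
    rw [Finset.mem_sigma] at hp
    exact Finset.ne_of_mem_erase hp.2 (congrArg Sigma.fst h)
  · rintro ⟨i, k⟩ hp
    rw [Finset.mem_sigma] at hp ⊢
    exact ⟨Finset.mem_of_mem_erase hp.2,
      Finset.mem_erase.2 ⟨(Finset.ne_of_mem_erase hp.2).symm, hp.1⟩⟩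
  · rintro ⟨i, k⟩ _
    rfl

lemma dd (t : ℕ) (x : F n s (t + 2)) : D n s a t (D n s a (t+1) x) = 0 := by
  induction x using F_induction n s with
  | h0 => rw [addhom_zero (D n s a (t+1)) (D_add n s a (t+1)),
      addhom_zero (D n s a t) (D_add n s a t)]
  | hadd v w hv hw => rw [D_add, D_add, hv, hw, add_zero]
  | hsingle T u z => exact dd_single n s a t T.1 (T.2) u z

-- ==== stage 4 ====

lemma single_congr {t : ℕ} {S1 S2 : Finset (Fin s)} (h : S1 = S2) {p1 : S1.card = t}
    {p2 : S2.card = t} {c1 c2 : R n} (hc : c1 = c2) :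
    (Finsupp.single ⟨S1, p1⟩ c1 : F n s t) = Finsupp.single ⟨S2, p2⟩ c2 := by
  subst h; subst hc; rfl

lemma Hterm_some {t : ℕ} {T : Finset (Fin s)} {u : Fin n →₀ ℕ} {j : Fin s} (z : ℂ)
    (hj : jm n s a (u + lcmExp n s a T) = some j) (hjT : j ∉ T) (hT : T.card = t)
    (p : (insert j T).card = t + 1) :
    Hterm n s a t T u z = Finsupp.single ⟨insert j T, p⟩
      (MvPolynomial.monomial (u + lcmExp n s a T - lcmExp n s a (insert j T)) (-z)) := by
  rw [Hterm, hj]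
  exact dif_pos ⟨hjT, hT⟩

lemma Hterm_mem {t : ℕ} {T : Finset (Fin s)} {u : Fin n →₀ ℕ} {j : Fin s} (z : ℂ)
    (hj : jm n s a (u + lcmExp n s a T) = some j) (hjT : j ∈ T) :
    Hterm n s a t T u z = 0 := by
  rw [Hterm, hj]
  exact dif_neg (by simp [hjT])

lemma H0term_some {u : Fin n →₀ ℕ} {j : Fin s} (z : ℂ) (hj : jm n s a u = some j) :
    H0term n s a u z = Finsupp.single ⟨{j}, Finset.card_singleton j⟩
      (MvPolynomial.monomial (u - a j) z) := by
  rw [H0term, hj]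

lemma lcmExp_singleton (i : Fin s) : lcmExp n s a {i} = a i := Finset.sup_singleton

lemma eps_single (T : {T : Finset (Fin s) // T.card = 1}) (c : R n) :
    eps n s a (Finsupp.single T c) = c * ∑ i ∈ T.1, MvPolynomial.monomial (a i) (1 : ℂ) :=
  Finsupp.sum_single_index (by simp)

lemma H0_zero : H0 n s a 0 = 0 := by simp [H0]

lemma eps_single_monomial (i : Fin s) (h1 : ({i} : Finset (Fin s)).card = 1)
    (u : Fin n →₀ ℕ) (z : ℂ) :
    eps n s a (Finsupp.single ⟨{i}, h1⟩ (MvPolynomial.monomial u z))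
      = MvPolynomial.monomial (u + a i) z := by
  rw [eps_single, Finset.sum_singleton, MvPolynomial.monomial_mul, mul_one]

lemma identB_single (i : Fin s) (h1 : ({i} : Finset (Fin s)).card = 1)
    (u : Fin n →₀ ℕ) (z : ℂ) :
    D n s a 1 (H n s a 1 (Finsupp.single ⟨{i}, h1⟩ (MvPolynomial.monomial u z)))
      + H0 n s a (eps n s a (Finsupp.single ⟨{i}, h1⟩ (MvPolynomial.monomial u z)))
      = Finsupp.single ⟨{i}, h1⟩ (MvPolynomial.monomial u z) := by
  have hib : a i ≤ u + a i := le_add_self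
  obtain ⟨j, hj⟩ := jm_some n s a hib
  have hji : j ≤ i := jm_min n s a hj i hib
  have hj' : jm n s a (u + lcmExp n s a {i}) = some j := by
    rw [lcmExp_singleton]; exact hj
  rw [H_single, eps_single_monomial, H0_single, H0term_some n s a z hj]
  by_cases hjiT : j = i
  · subst hjiT
    rw [Hterm_mem n s a z hj' (by simp), addhom_zero _ (D_add n s a 1), zero_add]
    exact single_congr n s rfl (by rw [add_tsub_cancel_right])
  · have hlt : j < i := lt_of_le_of_ne hji hjiT
    have hjnotmem : j ∉ ({i} : Finset (Fin s)) := by simp [hjiT]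
    have hcard2 : (insert j {i} : Finset (Fin s)).card = 1 + 1 := by
      rw [Finset.card_insert_of_notMem hjnotmem]; rfl
    rw [Hterm_some n s a z hj' hjnotmem h1 hcard2]
    rw [D_single n s a 1 ⟨insert j {i}, hcard2⟩]
    have hsum : (⟨insert j {i}, hcard2⟩ : {T : Finset (Fin s) // T.card = 2}).1
        = insert j {i} := rfl
    rw [hsum, Finset.sum_insert hjnotmem, Finset.sum_singleton]
    have hBji : lcmExp n s a (insert j {i}) ≤ u + a i :=
      Finset.sup_le (by rintro k hk; simp at hk
                        rcases hk with rfl | rfl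
                        · exact jm_mem n s a hj
                        · exact hib)
    have hBi_le : a i ≤ lcmExp n s a (insert j {i}) := le_B n s a (by simp)
    have hBj_le : a j ≤ lcmExp n s a (insert j {i}) := le_B n s a (by simp)
    have hterm1 : dTerm n s a 1 (insert j {i})
          (MvPolynomial.monomial (u + lcmExp n s a {i} - lcmExp n s a (insert j {i})) (-z)) j
        = Finsupp.single (⟨{i}, h1⟩ : {T : Finset (Fin s) // T.card = 1})
            (MvPolynomial.monomial u z) := by
      rw [dTerm_monomial n s a (Finset.mem_insert_self j {i}) hcard2]
      refine single_congr n s (Finset.erase_insert hjnotmem) ?_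
      have hposj : pos s (insert j {i}) j = 0 := by
        refine pos_eq_zero s ?_
        intro k hk; simp at hk; rcases hk with rfl | rfl
        · exact le_refl _
        · exact hji
      rw [hposj, Finset.erase_insert hjnotmem, lcmExp_singleton n s a i,
        tsub_add_tsub_cancel hBji hBi_le, add_tsub_cancel_right]
      norm_num
    have hterm2 : dTerm n s a 1 (insert j {i})
          (MvPolynomial.monomial (u + lcmExp n s a {i} - lcmExp n s a (insert j {i})) (-z)) i
        = - Finsupp.single (⟨{j}, Finset.card_singleton j⟩ : {T : Finset (Fin s) // T.card = 1})
            (MvPolynomial.monomial (u + a i - a j) z) := by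
      rw [dTerm_monomial n s a (by simp) hcard2]
      have hset : (insert j {i} : Finset (Fin s)).erase i = {j} := by
        rw [Finset.erase_insert_of_ne hjiT, Finset.erase_singleton, LawfulSingleton.insert_empty_eq]
      have hposi : pos s (insert j {i}) i = 1 := by
        rw [pos_insert s hjnotmem hlt, pos_eq_zero s (by simp)]
      rw [← Finsupp.single_neg]
      refine single_congr n s hset ?_
      rw [hposi, hset, lcmExp_singleton n s a j, lcmExp_singleton n s a i,
        tsub_add_tsub_cancel hBji hBj_le]
      norm_num
    rw [hterm1, hterm2]
    abel

lemma epsD_pair (x y : Fin s) (hxy : x < y) (h2 : ({x, y} : Finset (Fin s)).card = 2)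
    (u : Fin n →₀ ℕ) (z : ℂ) :
    eps n s a (D n s a 1 (Finsupp.single (⟨{x, y}, h2⟩ : {T : Finset (Fin s) // T.card = 2})
      (MvPolynomial.monomial u z))) = 0 := by
  have hxny : x ≠ y := ne_of_lt hxy
  have hxmem : x ∉ ({y} : Finset (Fin s)) := by simp [hxny]
  rw [D_single, addhom_sum (eps n s a) (eps_add n s a)]
  have hval : (⟨{x, y}, h2⟩ : {T : Finset (Fin s) // T.card = 2}).1 = insert x {y} := rfl
  rw [hval, Finset.sum_insert hxmem, Finset.sum_singleton]
  have hex : (insert x {y} : Finset (Fin s)).erase x = {y} := Finset.erase_insert hxmem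
  have hey : (insert x {y} : Finset (Fin s)).erase y = {x} := by
    rw [Finset.erase_insert_of_ne hxny, Finset.erase_singleton, LawfulSingleton.insert_empty_eq]
  have hax : a x ≤ lcmExp n s a (insert x {y}) := le_B n s a (by simp)
  have hay : a y ≤ lcmExp n s a (insert x {y}) := le_B n s a (by simp)
  have hposx : pos s (insert x {y}) x = 0 := by
    refine pos_eq_zero s ?_
    intro k hk; simp at hk; rcases hk with rfl | rfl
    · exact le_refl _
    · exact hxy.le
  have hposy : pos s (insert x {y}) y = 1 := by
    rw [pos_insert s hxmem hxy, pos_eq_zero s (by simp)]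
  rw [dTerm_monomial n s a (by simp) h2, dTerm_monomial n s a (by simp) h2,
    eps_single, eps_single]
  simp only [hex, hey, hposx, hposy, Finset.sum_singleton, lcmExp_singleton,
    MvPolynomial.monomial_mul, mul_one]
  rw [add_assoc u _ (a y), add_assoc u _ (a x), tsub_add_cancel_of_le hay,
    tsub_add_cancel_of_le hax, ← map_add,
    show ((-1 : ℂ) ^ (0 + 1) * z + (-1 : ℂ) ^ (1 + 1) * z) = 0 by ring, map_zero]

lemma epsD_single (T : Finset (Fin s)) (h2 : T.card = 2) (u : Fin n →₀ ℕ) (z : ℂ) :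
    eps n s a (D n s a 1 (Finsupp.single (⟨T, h2⟩ : {T : Finset (Fin s) // T.card = 2})
      (MvPolynomial.monomial u z))) = 0 := by
  obtain ⟨x, y, hxy, rfl⟩ := Finset.card_eq_two.1 h2
  rcases lt_or_gt_of_ne hxy with h | h
  · exact epsD_pair n s a x y h h2 u z
  · have hswap : ({x, y} : Finset (Fin s)) = {y, x} := Finset.pair_comm x y
    have h2' : ({y, x} : Finset (Fin s)).card = 2 := by rw [← hswap]; exact h2
    have heq : (⟨{x, y}, h2⟩ : {T : Finset (Fin s) // T.card = 2}) = ⟨{y, x}, h2'⟩ :=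
      Subtype.ext hswap
    rw [heq]
    exact epsD_pair n s a y x h h2' u z

-- ==== stage 5: the main homotopy identity ====

lemma single_add_single_zero {t : ℕ} {S1 S2 : Finset (Fin s)} (h : S1 = S2)
    {p1 : S1.card = t} {p2 : S2.card = t} {c1 c2 : R n} (hc : c1 + c2 = 0) :
    (Finsupp.single ⟨S1, p1⟩ c1 : F n s t) + Finsupp.single ⟨S2, p2⟩ c2 = 0 := by
  subst h
  rw [← Finsupp.single_add, Finsupp.single_eq_zero.2 hc]

lemma identA_single (t : ℕ) (T : Finset (Fin s)) (hT : T.card = t + 2)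
    (u : Fin n →₀ ℕ) (z : ℂ) :
    D n s a (t+2) (H n s a (t+2) (Finsupp.single (⟨T, hT⟩ : {T : Finset (Fin s) // T.card = t+2})
        (MvPolynomial.monomial u z)))
      + H n s a (t+1) (D n s a (t+1) (Finsupp.single (⟨T, hT⟩ : {T : Finset (Fin s) // T.card = t+2})
        (MvPolynomial.monomial u z)))
      = Finsupp.single (⟨T, hT⟩ : {T : Finset (Fin s) // T.card = t+2})
          (MvPolynomial.monomial u z) := by
  have hTne : T.Nonempty := Finset.card_pos.1 (by simp [hT])
  obtain ⟨i0, hi0⟩ := hTne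
  have hBb : lcmExp n s a T ≤ u + lcmExp n s a T := le_add_self
  obtain ⟨j, hj⟩ := jm_some n s a (le_trans (le_B n s a hi0) hBb)
  have hjleT : ∀ k ∈ T, j ≤ k := fun k hk => jm_min n s a hj k (le_trans (le_B n s a hk) hBb)
  have hbi : ∀ i, u + (lcmExp n s a T - lcmExp n s a (T.erase i)) + lcmExp n s a (T.erase i)
      = u + lcmExp n s a T := fun i => by
    rw [add_assoc, tsub_add_cancel_of_le (B_erase_le n s a T i)]
  have hji : ∀ i, jm n s a ((u + (lcmExp n s a T - lcmExp n s a (T.erase i)))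
      + lcmExp n s a (T.erase i)) = some j := fun i => by rw [hbi]; exact hj
  have hcarde : ∀ i ∈ T, (T.erase i).card = t + 1 := fun i hi => by
    rw [Finset.card_erase_of_mem hi, hT]; omega
  rw [H_single, D_single n s a (t+1) ⟨T, hT⟩,
    addhom_sum (H n s a (t+1)) (H_add n s a (t+1))]
  have hval : (⟨T, hT⟩ : {T : Finset (Fin s) // T.card = t+2}).1 = T := rfl
  rw [hval]
  have hstep : ∀ i ∈ T, H n s a (t+1) (dTerm n s a (t+1) T (MvPolynomial.monomial u z) i)
      = Hterm n s a (t+1) (T.erase i)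
          (u + (lcmExp n s a T - lcmExp n s a (T.erase i)))
          ((-1 : ℂ)^(pos s T i + 1) * z) := fun i hi => by
    rw [dTerm_monomial n s a hi hT, H_single]
  rw [Finset.sum_congr rfl hstep]
  by_cases hjT : j ∈ T
  · -- j ∈ T : the D∘H part vanishes, the H∘D sum collapses to the i = j term
    rw [Hterm_mem n s a z hj hjT, addhom_zero _ (D_add n s a (t+2)), zero_add]
    refine Finset.sum_eq_single_of_mem j hjT ?_ |>.trans ?_
    · intro i hi hij
      exact Hterm_mem n s a _ (hji i) (Finset.mem_erase.2 ⟨hij.symm, hjT⟩)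
    -- the i = j term gives back the original basis element
    have pins : (insert j (T.erase j)).card = (t + 1) + 1 := by
      rw [Finset.insert_erase hjT, hT]
    rw [Hterm_some n s a _ (hji j) (Finset.notMem_erase j T) (hcarde j hjT) pins]
    refine single_congr n s (Finset.insert_erase hjT) ?_
    rw [Finset.insert_erase hjT, hbi j, add_tsub_cancel_right,
      pos_eq_zero s hjleT]
    norm_num
  · -- j ∉ T
    have hjlt : ∀ k ∈ T, j < k := fun k hk =>
      lt_of_le_of_ne (hjleT k hk) (fun h => hjT (h ▸ hk))
    have pins : (insert j T).card = (t + 2) + 1 := by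
      rw [Finset.card_insert_of_notMem hjT, hT]
    have hBjT_le : lcmExp n s a (insert j T) ≤ u + lcmExp n s a T := by
      refine Finset.sup_le ?_
      intro k hk
      rcases Finset.mem_insert.1 hk with rfl | hk
      · exact jm_mem n s a hj
      · exact le_trans (le_B n s a hk) hBb
    have hBT_le : lcmExp n s a T ≤ lcmExp n s a (insert j T) :=
      B_mono n s a (Finset.subset_insert _ _)
    rw [Hterm_some n s a z hj hjT hT pins, D_single n s a (t+2) ⟨insert j T, pins⟩]
    have hval2 : (⟨insert j T, pins⟩ : {T : Finset (Fin s) // T.card = t+3}).1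
        = insert j T := rfl
    rw [hval2, Finset.sum_insert hjT]
    have hterm_j : dTerm n s a (t+2) (insert j T)
        (MvPolynomial.monomial (u + lcmExp n s a T - lcmExp n s a (insert j T)) (-z)) j
        = Finsupp.single (⟨T, hT⟩ : {T : Finset (Fin s) // T.card = t+2})
            (MvPolynomial.monomial u z) := by
      rw [dTerm_monomial n s a (Finset.mem_insert_self j T) pins]
      refine single_congr n s (Finset.erase_insert hjT) ?_
      have hpj : pos s (insert j T) j = 0 := by
        refine pos_eq_zero s ?_
        intro k hk
        rcases Finset.mem_insert.1 hk with rfl | hk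
        · exact le_refl _
        · exact hjleT k hk
      rw [hpj, Finset.erase_insert hjT,
        tsub_add_tsub_cancel hBjT_le hBT_le, add_tsub_cancel_right]
      norm_num
    rw [hterm_j, add_assoc, ← Finset.sum_add_distrib]
    have hcancel : ∀ i ∈ T, dTerm n s a (t+2) (insert j T)
          (MvPolynomial.monomial (u + lcmExp n s a T - lcmExp n s a (insert j T)) (-z)) i
        + Hterm n s a (t+1) (T.erase i)
            (u + (lcmExp n s a T - lcmExp n s a (T.erase i)))
            ((-1 : ℂ)^(pos s T i + 1) * z) = 0 := by
      intro i hi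
      have hjni : j ≠ i := (hjlt i hi).ne
      have hset : (insert j T).erase i = insert j (T.erase i) :=
        Finset.erase_insert_of_ne hjni
      have hjnTe : j ∉ T.erase i := fun h => hjT (Finset.mem_of_mem_erase h)
      have p2 : (insert j (T.erase i)).card = (t + 1) + 1 := by
        rw [Finset.card_insert_of_notMem hjnTe, hcarde i hi]
      rw [Hterm_some n s a _ (hji i) hjnTe (hcarde i hi) p2,
        dTerm_monomial n s a (Finset.mem_insert_of_mem hi) pins]
      have hexp1 : (u + lcmExp n s a T - lcmExp n s a (insert j T))
          + (lcmExp n s a (insert j T) - lcmExp n s a ((insert j T).erase i))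
          = u + lcmExp n s a T - lcmExp n s a (insert j (T.erase i)) := by
        rw [tsub_add_tsub_cancel hBjT_le
          (by rw [hset]; exact B_mono n s a (Finset.insert_subset_insert j
            (Finset.erase_subset i T))), hset]
      have hexp2 : u + (lcmExp n s a T - lcmExp n s a (T.erase i)) + lcmExp n s a (T.erase i)
          - lcmExp n s a (insert j (T.erase i))
          = u + lcmExp n s a T - lcmExp n s a (insert j (T.erase i)) := by
        rw [hbi i]
      rw [hexp1, hexp2]
      refine single_add_single_zero n s hset ?_
      rw [← map_add, MvPolynomial.monomial_eq_zero, pos_insert s hjT (hjlt i hi)]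
      ring
    rw [Finset.sum_congr rfl hcancel, Finset.sum_const_zero, add_zero]

-- ==== stage 6: assembly ====

lemma identA (t : ℕ) (v : F n s (t+2)) :
    D n s a (t+2) (H n s a (t+2) v) + H n s a (t+1) (D n s a (t+1) v) = v := by
  induction v using F_induction n s with
  | h0 =>
    rw [addhom_zero _ (H_add n s a (t+2)), addhom_zero _ (D_add n s a (t+2)),
      addhom_zero _ (D_add n s a (t+1)), addhom_zero _ (H_add n s a (t+1)), add_zero]
  | hadd v w hv hw =>
    rw [H_add n s a (t+2), D_add n s a (t+2), D_add n s a (t+1), H_add n s a (t+1),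
      add_add_add_comm, hv, hw]
  | hsingle T u z => exact identA_single n s a t T.1 T.2 u z

lemma identB (v : F n s 1) :
    D n s a 1 (H n s a 1 v) + H0 n s a (eps n s a v) = v := by
  induction v using F_induction n s with
  | h0 =>
    rw [addhom_zero _ (H_add n s a 1), addhom_zero _ (D_add n s a 1),
      addhom_zero _ (eps_add n s a), H0_zero, add_zero]
  | hadd v w hv hw =>
    rw [H_add n s a 1, D_add n s a 1, eps_add n s a, H0_add n s a,
      add_add_add_comm, hv, hw]
  | hsingle T u z =>
    obtain ⟨i, hi⟩ := Finset.card_eq_one.1 T.2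
    have hT : T = ⟨{i}, Finset.card_singleton i⟩ := Subtype.ext hi
    rw [hT]
    exact identB_single n s a i _ u z

lemma epsD (x : F n s 2) : eps n s a (D n s a 1 x) = 0 := by
  induction x using F_induction n s with
  | h0 => rw [addhom_zero _ (D_add n s a 1), addhom_zero _ (eps_add n s a)]
  | hadd v w hv hw => rw [D_add, eps_add, hv, hw, add_zero]
  | hsingle T u z => exact epsD_single n s a T.1 T.2 u z

/-- The Taylor complex of the monomial ideal `I = (m₁,…,m_s) ⊆ ℂ[x₁,…,x_n]`,
`m_i = x^{a i}`, is exact: the sequence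
`0 → F_s → ⋯ → F₂ → F₁ → I → 0` is an exact sequence of modules.
Exactness at `F_t` for `2 ≤ t ≤ s` (including injectivity of `F_s → F_{s−1}`,
since `F_{s+1} = 0`) is the first clause; exactness at `F₁` is the second; the
third says the image of `F₁ → R` is exactly the ideal `I`. -/
theorem taylor_complex_exact :
    (∀ t : ℕ, 1 ≤ t → Function.Exact (D n s a (t + 1)) (D n s a t)) ∧
    Function.Exact (D n s a 1) (eps n s a) ∧
    Set.range (eps n s a)
      = (Ideal.span (Set.range fun i => MvPolynomial.monomial (a i) (1 : ℂ)) :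
          Ideal (R n)) := by
  refine ⟨?_, ?_, ?_⟩
  · intro t ht
    obtain ⟨t', rfl⟩ : ∃ t', t = t' + 1 := ⟨t - 1, by omega⟩
    intro y
    constructor
    · intro h0
      refine ⟨H n s a (t'+2) y, ?_⟩
      have hA := identA n s a t' y
      rwa [h0, addhom_zero _ (H_add n s a (t'+1)), add_zero] at hA
    · rintro ⟨x, rfl⟩
      exact dd n s a (t'+1) x
  · intro y
    constructor
    · intro h0
      refine ⟨H n s a 1 y, ?_⟩
      have hB := identB n s a y
      rwa [h0, H0_zero, add_zero] at hB
    · rintro ⟨x, rfl⟩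
      exact epsD n s a x
  · ext p
    simp only [Set.mem_range, SetLike.mem_coe]
    constructor
    · rintro ⟨v, rfl⟩
      induction v using F_induction n s with
      | h0 =>
        rw [addhom_zero _ (eps_add n s a)]
        exact Ideal.zero_mem _
      | hadd v w hv hw =>
        rw [eps_add]
        exact Ideal.add_mem _ hv hw
      | hsingle T u z =>
        rw [eps_single]
        exact Ideal.mul_mem_left _ _
          (Ideal.sum_mem _ fun i _ => Ideal.subset_span ⟨i, rfl⟩)
    · intro hp
      induction hp using Submodule.span_induction with
      | mem x hx =>
        obtain ⟨i, rfl⟩ := hx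
        exact ⟨Finsupp.single ⟨{i}, Finset.card_singleton i⟩ (MvPolynomial.monomial 0 1),
          by rw [eps_single_monomial, zero_add]⟩
      | zero => exact ⟨0, addhom_zero _ (eps_add n s a)⟩
      | add x y hx hy ihx ihy =>
        obtain ⟨v, hv⟩ := ihx
        obtain ⟨w, hw⟩ := ihy
        exact ⟨v + w, by rw [eps_add, hv, hw]⟩
      | smul r x hx ih =>
        obtain ⟨v, hv⟩ := ih
        exact ⟨r • v, by rw [eps_smul, hv, smul_eq_mul]⟩

end TaylorComplex
end

section
/- With F(t₂,t₃) = −Q − \bar{Q}/(t₂t₃) + Q\bar{Q}(1−t₂)(1−t₃)/(t₂t₃) as in the edge character, the element t₁^{−1} F(t₂,t₃)/(1−t₁^{−1}) − F(t₂ t₁^{−m}, t₃ t₁^{−m'})/(1−t₁^{−1}) of the fraction field of ℤ[t₁^{±1},t₂^{±1},t₃^{±1}] is actually a Laurent polynomial, for any integers m, m'. -/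
/-- A 2-dimensional partition: a finite downward-closed subset of `ℤ_{≥0}^2`. -/
def IsPartition2 (lam : Finset (ℕ × ℕ)) : Prop :=
  ∀ p ∈ lam, ∀ q : ℕ × ℕ, q.1 ≤ p.1 → q.2 ≤ p.2 → q ∈ lam

/-- The Laurent polynomial ring `ℤ[t₁^{±1},t₂^{±1},t₃^{±1}]`. -/
abbrev Laurent3 : Type := AddMonoidAlgebra ℤ (ℤ × ℤ × ℤ)

/-- The Laurent monomial `t^v = t₁^{v₁}t₂^{v₂}t₃^{v₃}`. -/
noncomputable def T (v : ℤ × ℤ × ℤ) : Laurent3 := AddMonoidAlgebra.single v 1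

/-- `Q(u,w) = Σ_{(a,b)∈λ} u^a w^b`, evaluated on Laurent monomials with
exponent vectors `v, w`. -/
noncomputable def Qsub (lam : Finset (ℕ × ℕ)) (v w : ℤ × ℤ × ℤ) : Laurent3 :=
  ∑ p ∈ lam, T ((p.1 : ℤ) • v + (p.2 : ℤ) • w)

/-- The edge character `F(t₂,t₃) = −Q − Q̄/(t₂t₃) + Q·Q̄·(1−t₂)(1−t₃)/(t₂t₃)`
with `t₂, t₃` replaced by the Laurent monomials with exponent vectors `v, w`
(so `Q̄` gets exponent vectors `−v, −w`). -/
noncomputable def Fsub (lam : Finset (ℕ × ℕ)) (v w : ℤ × ℤ × ℤ) : Laurent3 :=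
  -Qsub lam v w - Qsub lam (-v) (-w) * T (-v - w)
    + Qsub lam v w * Qsub lam (-v) (-w) * (1 - T v) * (1 - T w) * T (-v - w)

def pi1 : (ℤ × ℤ × ℤ) →+ (ℤ × ℤ × ℤ) where
  toFun x := (0, x.2)
  map_zero' := rfl
  map_add' x y := by simp [Prod.ext_iff]

noncomputable def phi : Laurent3 →+* Laurent3 :=
  AddMonoidAlgebra.mapDomainRingHom ℤ pi1

lemma T_mul (v w : ℤ × ℤ × ℤ) : T v * T w = T (v + w) := by
  simp [T, AddMonoidAlgebra.single_mul_single]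

lemma T_zero : T 0 = 1 := by simp [T, AddMonoidAlgebra.one_def]

lemma phi_T (v : ℤ × ℤ × ℤ) : phi (T v) = T (pi1 v) := by
  simp [phi, T, AddMonoidAlgebra.mapDomain_single]

lemma T_e_dvd (k : ℤ) : (1 - T (-1, 0, 0)) ∣ (1 - T (k • ((-1 : ℤ), 0, 0))) := by
  have hpow : ∀ n : ℕ, ∀ v : ℤ × ℤ × ℤ, T v ^ n = T ((n : ℤ) • v) := by
    intro n v
    simp [T, AddMonoidAlgebra.single_pow, natCast_zsmul]
  rcases le_or_gt 0 k with hk | hk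
  · obtain ⟨n, rfl⟩ := Int.eq_ofNat_of_zero_le hk
    rw [← hpow]
    simpa using sub_dvd_pow_sub_pow (1 : Laurent3) (T (-1, 0, 0)) n
  · obtain ⟨n, rfl⟩ : ∃ n : ℕ, k = -(n : ℤ) := ⟨k.natAbs, by omega⟩
    have hx : (-(n:ℤ)) • ((-1:ℤ),(0:ℤ),(0:ℤ)) = ((n:ℤ)) • ((1:ℤ),(0:ℤ),(0:ℤ)) := by
      simp [Prod.ext_iff]
    rw [hx, ← hpow]
    have h2 : (1:Laurent3) - T (-1,0,0) ∣ T (1,0,0) - 1 := by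
      refine ⟨T (1,0,0), ?_⟩
      rw [sub_mul, one_mul, T_mul]
      norm_num [T_zero]
      exact T_zero.symm
    have h1 := h2.trans (sub_dvd_pow_sub_pow (T (1, 0, 0)) (1 : Laurent3) n)
    rw [one_pow] at h1
    exact (dvd_sub_comm).mp h1

def toL (f : (ℤ × ℤ × ℤ) →₀ ℤ) : Laurent3 := AddMonoidAlgebra.ofCoeff f

lemma dvd_sub_phi' (f : (ℤ × ℤ × ℤ) →₀ ℤ) :
    (1 - T (-1, 0, 0)) ∣ (toL f - phi (toL f)) := by
  induction f using Finsupp.induction_linear with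
  | zero =>
    have : toL 0 = 0 := rfl
    simp [this]
  | add f g hf hg =>
    have h0 : toL (f + g) = toL f + toL g := rfl
    rw [h0, map_add]
    have h : toL f + toL g - (phi (toL f) + phi (toL g))
        = (toL f - phi (toL f)) + (toL g - phi (toL g)) := by ring
    rw [h]; exact dvd_add hf hg
  | single a b =>
    show (1 - T (-1, 0, 0)) ∣
      (AddMonoidAlgebra.single a b - phi (AddMonoidAlgebra.single a b))
    have h1 : (AddMonoidAlgebra.single a b : Laurent3)
        = AddMonoidAlgebra.single 0 b * T a := by
      simp [T, AddMonoidAlgebra.single_mul_single]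
    have h2 : phi (AddMonoidAlgebra.single a b : Laurent3)
        = AddMonoidAlgebra.single (0 : ℤ×ℤ×ℤ) b * T (pi1 a) := by
      have h3 : phi (AddMonoidAlgebra.single a b : Laurent3)
          = AddMonoidAlgebra.single (pi1 a) b := by
        simp [phi, AddMonoidAlgebra.mapDomain_single]
      rw [h3]
      simp [T, AddMonoidAlgebra.single_mul_single]
    rw [h2, h1, ← mul_sub]
    refine Dvd.dvd.mul_left ?_ _
    have key2 : T a - T (pi1 a) = -(T (pi1 a)) * (1 - T ((-a.1) • ((-1:ℤ),(0:ℤ),(0:ℤ)))) := by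
      have hx : (-a.1) • ((-1:ℤ),(0:ℤ),(0:ℤ)) = ((a.1 : ℤ), (0:ℤ), (0:ℤ)) := by
        simp [Prod.ext_iff]
      rw [hx, neg_mul, mul_sub, mul_one, T_mul, neg_sub]
      congr 2
      show a = ((0:ℤ), a.2) + (a.1, (0:ℤ), (0:ℤ))
      simp [Prod.ext_iff]
    rw [key2]
    exact Dvd.dvd.mul_left (T_e_dvd (-a.1)) _

lemma dvd_sub_phi (X : Laurent3) : (1 - T (-1, 0, 0)) ∣ (X - phi X) := dvd_sub_phi' X.coeff

lemma phi_Qsub (lam : Finset (ℕ × ℕ)) (v w : ℤ × ℤ × ℤ) :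
    phi (Qsub lam v w) = Qsub lam (pi1 v) (pi1 w) := by
  simp only [Qsub, map_sum, phi_T, map_add, AddMonoidHom.map_zsmul]

lemma phi_Fsub (lam : Finset (ℕ × ℕ)) (v w : ℤ × ℤ × ℤ) :
    phi (Fsub lam v w) = Fsub lam (pi1 v) (pi1 w) := by
  simp only [Fsub, map_add, map_sub, map_neg, map_mul, map_one, phi_Qsub, phi_T,
    AddMonoidHom.map_neg, AddMonoidHom.map_sub]

/-- The edge term
`E = t₁^{−1}F(t₂,t₃)/(1−t₁^{−1}) − F(t₂t₁^{−m}, t₃t₁^{−m'})/(1−t₁^{−1})`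
is a Laurent polynomial: the numerator is divisible by `1 − t₁^{−1}` in
`ℤ[t₁^{±1},t₂^{±1},t₃^{±1}]`. -/
theorem edge_term_is_laurent_polynomial
    (lam : Finset (ℕ × ℕ)) (hlam : IsPartition2 lam) (m m' : ℤ) :
    ∃ G : Laurent3,
      G * (1 - T (-1, 0, 0)) =
        T (-1, 0, 0) * Fsub lam (0, 1, 0) (0, 0, 1)
          - Fsub lam ((-m : ℤ), 1, 0) ((-m' : ℤ), 0, 1) := by
  set X : Laurent3 := T (-1, 0, 0) * Fsub lam (0, 1, 0) (0, 0, 1)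
      - Fsub lam ((-m : ℤ), 1, 0) ((-m' : ℤ), 0, 1) with hX
  have hphi : phi X = 0 := by
    have he : phi (T ((-1:ℤ), 0, 0)) = 1 := by
      rw [phi_T]
      show T ((0:ℤ),(0:ℤ),(0:ℤ)) = 1
      exact T_zero
    have h1 : pi1 ((-m : ℤ), 1, 0) = ((0:ℤ), (1:ℤ), (0:ℤ)) := rfl
    have h2 : pi1 ((-m' : ℤ), 0, 1) = ((0:ℤ), (0:ℤ), (1:ℤ)) := rfl
    have h3 : pi1 ((0:ℤ), (1:ℤ), (0:ℤ)) = ((0:ℤ), (1:ℤ), (0:ℤ)) := rfl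
    have h4 : pi1 ((0:ℤ), (0:ℤ), (1:ℤ)) = ((0:ℤ), (0:ℤ), (1:ℤ)) := rfl
    rw [hX, map_sub, map_mul, he, one_mul, phi_Fsub, phi_Fsub, h1, h2, h3, h4, sub_self]
  have hdvd : (1 - T (-1, 0, 0)) ∣ X := by
    have := dvd_sub_phi X
    rwa [hphi, sub_zero] at this
  obtain ⟨G, hG⟩ := hdvd
  exact ⟨G, by rw [hG]; ring⟩
end

section
/- Define F⁺(t₂,t₃) = −Q − Q\bar{Q}(1−t₂)/t₂, where Q is the generating Laurent polynomial of a 2-dimensional partition λ and \bar{Q}(t₂,t₃) = Q(t₂^{−1},t₃^{−1}). Then the value of (m t₂ ∂/∂t₂ + m' t₃ ∂/∂t₃ − 1) F⁺ at t₂ = t₃ = 1 is congruent modulo 2 to f_{m,m'}(λ) + m|λ|, where f_{m,m'}(λ) = Σ_{(i,j)∈λ} (m(i−1)+m'(j−1)+1) (boxes indexed from 1). -/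
/-- The Laurent polynomial ring `ℤ[t₂^{±1}, t₃^{±1}]`. -/
abbrev Laurent2 : Type := AddMonoidAlgebra ℤ (ℤ × ℤ)

/-- The substitution `(t₂,t₃) ↦ (t₂⁻¹,t₃⁻¹)` on `ℤ[t₂^{±1},t₃^{±1}]`. -/
noncomputable def inv2 : Laurent2 ≃ₐ[ℤ] Laurent2 :=
  AddMonoidAlgebra.domCongr ℤ ℤ (AddEquiv.neg (ℤ × ℤ))

/-- The generating Laurent polynomial `Q(t₂,t₃) = Σ_{(a,b)∈λ} t₂^a t₃^b`. -/
noncomputable def genQ (lam : Finset (ℕ × ℕ)) : Laurent2 :=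
  ∑ p ∈ lam, (AddMonoidAlgebra.single ((p.1 : ℤ), (p.2 : ℤ)) (1 : ℤ) : Laurent2)

/-- The edge character
`F = −Q − Q̄/(t₂t₃) + Q·Q̄·(1−t₂)(1−t₃)/(t₂t₃)`,
where `Q̄(t₂,t₃) = Q(t₂⁻¹,t₃⁻¹)`. -/
noncomputable def edgeF (lam : Finset (ℕ × ℕ)) : Laurent2 :=
  -genQ lam - inv2 (genQ lam) * (AddMonoidAlgebra.single ((-1 : ℤ), (-1 : ℤ)) (1 : ℤ) : Laurent2)
    + genQ lam * inv2 (genQ lam)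
      * (1 - (AddMonoidAlgebra.single ((1 : ℤ), (0 : ℤ)) (1 : ℤ) : Laurent2))
      * (1 - (AddMonoidAlgebra.single ((0 : ℤ), (1 : ℤ)) (1 : ℤ) : Laurent2))
      * (AddMonoidAlgebra.single ((-1 : ℤ), (-1 : ℤ)) (1 : ℤ) : Laurent2)

/-- The half-edge character `F⁺ = −Q − Q·Q̄·(1−t₂)/t₂`. -/
noncomputable def edgeFplus (lam : Finset (ℕ × ℕ)) : Laurent2 :=
  -genQ lam - genQ lam * inv2 (genQ lam)
      * ((AddMonoidAlgebra.single ((-1 : ℤ), (0 : ℤ)) (1 : ℤ) : Laurent2) - 1)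

/-- Evaluation of `(m t₂ ∂/∂t₂ + m' t₃ ∂/∂t₃ − 1) G` at `t₂ = t₃ = 1`:
a Laurent polynomial `G = Σ c_{ab} t₂^a t₃^b` is sent to
`Σ c_{ab} (m·a + m'·b − 1)`. -/
noncomputable def derivEval (m m' : ℤ) (G : Laurent2) : ℤ :=
  ∑ k ∈ G.coeff.support, G.coeff k * (m * k.1 + m' * k.2 - 1)

noncomputable def dEval (m m' : ℤ) : Laurent2 →+ ℤ :=
  (Finsupp.liftAddHom fun k : ℤ × ℤ => AddMonoidHom.mulRight (m * k.1 + m' * k.2 - 1)).comp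
    AddMonoidAlgebra.coeffAddEquiv.toAddMonoidHom

lemma dEval_single (m m' : ℤ) (k : ℤ × ℤ) (c : ℤ) :
    dEval m m' (AddMonoidAlgebra.single k c) = c * (m * k.1 + m' * k.2 - 1) := by
  rw [dEval, AddMonoidAlgebra.single]
  erw [Finsupp.liftAddHom_apply_single]
  rfl

lemma derivEval_eq (m m' : ℤ) (G : Laurent2) :
    derivEval m m' G = dEval m m' G := by
  rw [dEval, derivEval]
  erw [Finsupp.liftAddHom_apply]
  rfl


/-- The parity computation for the half-edge character:
`(m t₂ ∂/∂t₂ + m' t₃ ∂/∂t₃ − 1) F⁺` evaluated at `(1,1)` is congruent mod 2 to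
`f_{m,m'}(λ) + m·|λ|`, where (boxes of `λ` indexed from `0`)
`f_{m,m'}(λ) = Σ_{(a,b)∈λ} (m·a + m'·b + 1)`. -/
theorem halfEdge_parity (lam : Finset (ℕ × ℕ)) (hlam : IsPartition2 lam) (m m' : ℤ) :
    Int.ModEq 2 (derivEval m m' (edgeFplus lam))
      ((∑ p ∈ lam, (m * (p.1 : ℤ) + m' * (p.2 : ℤ) + 1)) + m * lam.card) := by
  classical
  set n : ℤ := (lam.card : ℤ) with hn
  have hinv : inv2 (genQ lam)
      = ∑ q ∈ lam, (AddMonoidAlgebra.single (-(q.1 : ℤ), -(q.2 : ℤ)) (1 : ℤ) : Laurent2) := by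
    rw [inv2, genQ, map_sum]
    refine Finset.sum_congr rfl fun q _ => ?_
    rw [AddMonoidAlgebra.domCongr_single]
    rfl
  have hprod : genQ lam * inv2 (genQ lam)
      = ∑ p ∈ lam, ∑ q ∈ lam,
          (AddMonoidAlgebra.single ((p.1 : ℤ) - q.1, (p.2 : ℤ) - q.2) (1 : ℤ) : Laurent2) := by
    rw [hinv, genQ, Finset.sum_mul_sum]
    refine Finset.sum_congr rfl fun p _ => Finset.sum_congr rfl fun q _ => ?_
    rw [AddMonoidAlgebra.single_mul_single]
    norm_num [Prod.mk_add_mk, sub_eq_add_neg]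
  have hE : edgeFplus lam = -genQ lam
      - ∑ p ∈ lam, ∑ q ∈ lam,
          ((AddMonoidAlgebra.single ((p.1 : ℤ) - q.1 - 1, (p.2 : ℤ) - q.2) (1 : ℤ) : Laurent2)
            - AddMonoidAlgebra.single ((p.1 : ℤ) - q.1, (p.2 : ℤ) - q.2) (1 : ℤ)) := by
    rw [edgeFplus, hprod]
    congr 1
    rw [Finset.sum_mul]
    refine Finset.sum_congr rfl fun p _ => ?_
    rw [Finset.sum_mul]
    refine Finset.sum_congr rfl fun q _ => ?_
    rw [mul_sub, mul_one, AddMonoidAlgebra.single_mul_single]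
    norm_num [Prod.mk_add_mk, sub_eq_add_neg]
  have hA : derivEval m m' (edgeFplus lam)
      = -(∑ p ∈ lam, (m * (p.1 : ℤ) + m' * (p.2 : ℤ) - 1)) + m * (n * n) := by
    rw [derivEval_eq, hE, map_sub, map_neg]
    rw [genQ, map_sum, map_sum]
    have h1 : ∀ p ∈ lam, dEval m m'
        (AddMonoidAlgebra.single ((p.1 : ℤ), (p.2 : ℤ)) (1 : ℤ) : Laurent2)
        = m * (p.1 : ℤ) + m' * (p.2 : ℤ) - 1 := fun p _ => by
      rw [dEval_single]; ring
    rw [Finset.sum_congr rfl h1]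
    have h2 : ∀ p ∈ lam, dEval m m'
        (∑ q ∈ lam,
          ((AddMonoidAlgebra.single ((p.1 : ℤ) - q.1 - 1, (p.2 : ℤ) - q.2) (1 : ℤ) : Laurent2)
            - AddMonoidAlgebra.single ((p.1 : ℤ) - q.1, (p.2 : ℤ) - q.2) (1 : ℤ)))
        = n * (-m) := fun p _ => by
      rw [map_sum]
      have : ∀ q ∈ lam, dEval m m'
          ((AddMonoidAlgebra.single ((p.1 : ℤ) - q.1 - 1, (p.2 : ℤ) - q.2) (1 : ℤ) : Laurent2)
            - AddMonoidAlgebra.single ((p.1 : ℤ) - q.1, (p.2 : ℤ) - q.2) (1 : ℤ)) = -m :=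
        fun q _ => by rw [map_sub, dEval_single, dEval_single]; ring
      rw [Finset.sum_congr rfl this, Finset.sum_const, nsmul_eq_mul, hn]
    rw [Finset.sum_congr rfl h2, Finset.sum_const, nsmul_eq_mul, ← hn]
    ring
  rw [hA]
  rw [Int.ModEq]
  set S : ℤ := ∑ p ∈ lam, (m * (p.1 : ℤ) + m' * (p.2 : ℤ)) with hS
  have e1 : (∑ p ∈ lam, (m * (p.1 : ℤ) + m' * (p.2 : ℤ) - 1)) = S - n := by
    rw [Finset.sum_sub_distrib, Finset.sum_const, nsmul_eq_mul, hn, hS, mul_one]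
  have e2 : (∑ p ∈ lam, (m * (p.1 : ℤ) + m' * (p.2 : ℤ) + 1)) = S + n := by
    rw [Finset.sum_add_distrib, Finset.sum_const, nsmul_eq_mul, hn, hS, mul_one]
  rw [e1, e2, ← Int.ModEq]
  obtain ⟨k, hk⟩ := Int.even_mul_succ_self (n - 1)
  have : (S + n + m * n) - (-(S - n) + m * (n * n)) = 2 * (S - m * k) := by
    linear_combination (-m) * hk
  exact (Int.modEq_iff_dvd.mpr ⟨S - m * k, this⟩)
end
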